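/- Let X be an n×p totally unimodular matrix with n ≥ p, and define D-efficiency D(X) = 100·(det(XᵀX))^{1/p}/n and robustness r(X) as the fraction of nonsingular p×p row-submatrices. Then r(X) = (n·D(X)/100)^p / C(n,p) and D(X) = 100·(C(n,p)·r(X))^{1/p}/n. -/

import Mathlib

/-- A real matrix is totally unimodular if every square submatrix has determinant
0, 1 or −1. -/
def TotallyUnimodular {n p : ℕ} (X : Matrix (Fin n) (Fin p) ℝ) : Prop :=
  ∀ (k : ℕ) (f : Fin k → Fin n) (g : Fin k → Fin p),
    (X.submatrix f g).det = 0 ∨ (X.submatrix f g).det = 1 ∨ (X.submatrix f g).det = -1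

/-! By Cauchy–Binet, `det (Xᵀ * X)` is the sum of the squares of the `p × p` row-minors of `X`.
Total unimodularity makes each square `0` or `1`, so `det (Xᵀ * X)` counts the nonsingular
`p × p` row-submatrices, i.e. it equals `C(n,p) · r`; both identities are rearrangements of the
definition of `D`. -/

open Finset Equiv Matrix

namespace Finset

variable {α : Type*} [LinearOrder α] {p : ℕ}

def embeddingOfPerm (x : {S : Finset α // S.card = p} × Perm (Fin p)) : Fin p ↪ α :=
  x.2.toEmbedding.trans (x.1.1.orderEmbOfFin x.1.2).toEmbedding

theorem range_embeddingOfPerm (x : {S : Finset α // S.card = p} × Perm (Fin p)) :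
    Set.range (embeddingOfPerm x) = x.1.1 := by
  simp only [embeddingOfPerm, Function.Embedding.coe_trans, Set.range_comp,
    Equiv.coe_toEmbedding, x.2.range_eq_univ, Set.image_univ, RelEmbedding.coe_toEmbedding,
    range_orderEmbOfFin]

theorem embeddingOfPerm_injective : Function.Injective (embeddingOfPerm (α := α) (p := p)) := by
  rintro ⟨S, σ⟩ ⟨T, τ⟩ h
  obtain rfl : S = T := Subtype.ext <| by
    simpa only [range_embeddingOfPerm, coe_inj] using
      congrArg (fun f : Fin p ↪ α => Set.range f) h
  refine Prod.ext rfl (Equiv.ext fun i => (S.1.orderEmbOfFin S.2).injective ?_)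
  exact DFunLike.congr_fun h i

variable [Fintype α]

theorem embeddingOfPerm_bijective : Function.Bijective (embeddingOfPerm (α := α) (p := p)) := by
  rw [Fintype.bijective_iff_injective_and_card]
  refine ⟨embeddingOfPerm_injective, ?_⟩
  rw [Fintype.card_prod, Fintype.card_finset_len, Fintype.card_perm, Fintype.card_embedding_eq,
    Nat.descFactorial_eq_factorial_mul_choose, Fintype.card_fin, mul_comm]

theorem sum_eq_sum_finset_sum_perm {M : Type*} [AddCommMonoid M] (g : (Fin p → α) → M)
    (hg : ∀ f, ¬ Function.Injective f → g f = 0) :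
    ∑ f, g f = ∑ S : {S : Finset α // S.card = p}, ∑ σ : Perm (Fin p),
      g (S.1.orderEmbOfFin S.2 ∘ σ) := by
  calc ∑ f, g f = ∑ f : Fin p ↪ α, g f :=
        (Fintype.sum_of_injective _ DFunLike.coe_injective _ _
          (fun f hf => hg f fun hinj => hf ⟨⟨f, hinj⟩, rfl⟩) fun _ => rfl).symm
    _ = ∑ x, g (embeddingOfPerm x) :=
        (Fintype.sum_bijective _ embeddingOfPerm_bijective _ _ fun _ => rfl).symm
    _ = _ := Fintype.sum_prod_type _

end Finset

namespace Matrix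

variable {R : Type*} [CommRing R]

theorem det_mul_eq_sum_prod_mul_det_submatrix {m n : Type*} [Fintype m] [DecidableEq m]
    [Fintype n] (A : Matrix m n R) (B : Matrix n m R) :
    (A * B).det = ∑ f : m → n, (∏ i, A i (f i)) * (B.submatrix f id).det := by
  have hrows : A * B = fun i => ∑ k, A i k • B k := by
    ext i j
    simp [mul_apply, Finset.sum_apply]
  rw [hrows]
  change (detRowAlternating : (m → R) [⋀^m]→ₗ[R] R).toMultilinearMap _ = _
  rw [MultilinearMap.map_sum]
  congr! 1 with f
  rw [MultilinearMap.map_smul_univ, smul_eq_mul]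
  rfl

theorem det_submatrix_eq_zero_of_not_injective {m n : Type*} [Fintype m] [DecidableEq m]
    (B : Matrix n m R) {f : m → n} (hf : ¬ Function.Injective f) :
    (B.submatrix f id).det = 0 := by
  obtain ⟨i, j, hij, hne⟩ := Function.not_injective_iff.mp hf
  exact det_zero_of_row_eq hne (by ext; simp [hij])

theorem sum_perm_prod_mul_det_submatrix_comp {m n : Type*} [Fintype m] [DecidableEq m]
    (A : Matrix m n R) (B : Matrix n m R) (e : m → n) :
    ∑ σ : Perm m, (∏ i, A i (e (σ i))) * (B.submatrix (e ∘ σ) id).det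
      = (A.submatrix id e).det * (B.submatrix e id).det := by
  have hB (σ : Perm m) : (B.submatrix (e ∘ σ) id).det = σ.sign * (B.submatrix e id).det :=
    det_permute σ (B.submatrix e id)
  rw [← det_transpose (A.submatrix id e), det_apply', sum_mul]
  refine sum_congr rfl fun σ _ => ?_
  rw [hB]
  simp only [transpose_apply, submatrix_apply, id]
  ring

theorem det_mul_eq_sum_det_submatrix_mul_det_submatrix {α : Type*} [Fintype α] [LinearOrder α]
    {p : ℕ} (A : Matrix (Fin p) α R) (B : Matrix α (Fin p) R) :
    (A * B).det = ∑ S : {S : Finset α // S.card = p},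
      (A.submatrix id (S.1.orderEmbOfFin S.2)).det *
        (B.submatrix (S.1.orderEmbOfFin S.2) id).det := by
  rw [det_mul_eq_sum_prod_mul_det_submatrix, Finset.sum_eq_sum_finset_sum_perm]
  · exact sum_congr rfl fun S _ => sum_perm_prod_mul_det_submatrix_comp A B _
  · intro f hf
    rw [det_submatrix_eq_zero_of_not_injective B hf, mul_zero]

theorem det_transpose_mul_self_eq_sum_sq {α : Type*} [Fintype α] [LinearOrder α] {p : ℕ}
    (X : Matrix α (Fin p) R) :
    (Xᵀ * X).det = ∑ S : {S : Finset α // S.card = p},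
      (X.submatrix (S.1.orderEmbOfFin S.2) id).det ^ 2 := by
  rw [det_mul_eq_sum_det_submatrix_mul_det_submatrix]
  refine sum_congr rfl fun S _ => ?_
  rw [← transpose_submatrix, det_transpose, sq]

end Matrix

theorem TotallyUnimodular.det_transpose_mul_self_eq_card {n p : ℕ}
    {X : Matrix (Fin n) (Fin p) ℝ} (hTU : TotallyUnimodular X) :
    (Xᵀ * X).det = (Nat.card {S : {S : Finset (Fin n) // S.card = p} //
        (X.submatrix (S.1.orderEmbOfFin S.2) id).det ≠ 0} : ℝ) := by
  classical
  have hsq (S : {S : Finset (Fin n) // S.card = p}) :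
      (X.submatrix (S.1.orderEmbOfFin S.2) id).det ^ 2
        = if (X.submatrix (S.1.orderEmbOfFin S.2) id).det ≠ 0 then 1 else 0 := by
    rcases hTU p (S.1.orderEmbOfFin S.2) id with h | h | h <;> simp [h]
  rw [Matrix.det_transpose_mul_self_eq_sum_sq, sum_congr rfl fun S _ => hsq S, sum_boole,
    Nat.card_eq_fintype_card, Fintype.card_subtype]

/-- For a totally unimodular n×p matrix X with 0 < p ≤ n, the D-efficiency
D(X) = 100·det(XᵀX)^{1/p}/n and the robustness r(X) (fraction of nonsingular p×p
row-submatrices) satisfy r = (n·D/100)^p / C(n,p) and D = 100·(C(n,p)·r)^{1/p}/n. -/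
theorem robustness_defficiency_relation (n p : ℕ) (hp : 0 < p) (hnp : p ≤ n)
    (X : Matrix (Fin n) (Fin p) ℝ) (hTU : TotallyUnimodular X) (r D : ℝ)
    (hr : r = (Nat.card {S : {S : Finset (Fin n) // S.card = p} //
        (X.submatrix (S.1.orderEmbOfFin S.2) id).det ≠ 0} : ℝ) / (n.choose p : ℝ))
    (hD : D = 100 * ((X.transpose * X).det ^ ((1 : ℝ) / (p : ℝ))) / (n : ℝ)) :
    r = ((n : ℝ) * D / 100) ^ p / (n.choose p : ℝ) ∧
      D = 100 * (((n.choose p : ℝ) * r) ^ ((1 : ℝ) / (p : ℝ))) / (n : ℝ) := by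
  set N := Nat.card {S : {S : Finset (Fin n) // S.card = p} //
    (X.submatrix (S.1.orderEmbOfFin S.2) id).det ≠ 0}
  have hdet : (Xᵀ * X).det = N := hTU.det_transpose_mul_self_eq_card
  have hn : (n : ℝ) ≠ 0 := by exact_mod_cast (hp.trans_le hnp).ne'
  have hC : (n.choose p : ℝ) ≠ 0 := by exact_mod_cast (Nat.choose_pos hnp).ne'
  have hroot : (n : ℝ) * D / 100 = (N : ℝ) ^ ((1 : ℝ) / p) := by
    rw [hD, hdet]
    field_simp
  have hN : (n.choose p : ℝ) * r = N := by
    rw [hr]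
    field_simp
  constructor
  · rw [hroot, one_div, Real.rpow_inv_natCast_pow (Nat.cast_nonneg N) hp.ne', hr]
  · rw [hD, hdet, hN]
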